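/- arXiv:1402.5709 — 5 statements merged into one kernel-verified Lean document; each statement's English description precedes it below -/
import Mathlib

section
/- Let g, d, t be real numbers with |g| ≤ 1/2, |d| ≤ 1 and 0 ≤ t ≤ 1, and let A(g,d,t) be the 2×2 real matrix [[1+g, −d·t], [−d·t, (1+d²t²)/(1+g)]]. Then for every vector v ∈ ℝ², (2/11)‖v‖² ≤ vᵀ A(g,d,t) v ≤ (11/2)‖v‖². -/
/-! For a symmetric `2 × 2` matrix `M`, Cayley–Hamilton gives
`tr M · vᵀMv = det M · |v|² + |Mv|²`; applied to `M` and to `adj M = tr M · 1 - M` this yields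
`(det M / tr M) |v|² ≤ vᵀMv ≤ tr M · |v|²` whenever `det M ≥ 0 < tr M`.
The coefficient matrix has determinant `1` and trace `(1 + g) + (1 + d²t²)/(1 + g) ≤ 9/2`. -/

open Matrix

namespace Matrix

variable {M : Matrix (Fin 2) (Fin 2) ℝ}

theorem trace_mul_dotProduct_mulVec_fin_two (hM : M.IsSymm) (v : Fin 2 → ℝ) :
    M.trace * (v ⬝ᵥ M *ᵥ v) = M.det * (v ⬝ᵥ v) + (M *ᵥ v) ⬝ᵥ (M *ᵥ v) := by
  have h10 : M 1 0 = M 0 1 := hM.apply 0 1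
  simp only [trace_fin_two, det_fin_two, dotProduct, mulVec, Fin.sum_univ_two, h10]
  ring

theorem det_mul_dotProduct_le_trace_mul_dotProduct_mulVec (hM : M.IsSymm) (v : Fin 2 → ℝ) :
    M.det * (v ⬝ᵥ v) ≤ M.trace * (v ⬝ᵥ M *ᵥ v) := by
  rw [trace_mul_dotProduct_mulVec_fin_two hM]
  exact le_add_of_nonneg_right (dotProduct_star_self_nonneg _)

theorem add_adjugate_fin_two (M : Matrix (Fin 2) (Fin 2) ℝ) : M + M.adjugate = M.trace • 1 := by
  ext i j
  fin_cases i <;> fin_cases j <;> simp [adjugate_fin_two, trace_fin_two, add_comm]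

theorem dotProduct_mulVec_le_trace_mul_dotProduct (hM : M.IsSymm) (htr : 0 < M.trace)
    (hdet : 0 ≤ M.det) (v : Fin 2 → ℝ) :
    v ⬝ᵥ M *ᵥ v ≤ M.trace * (v ⬝ᵥ v) := by
  have hsplit : v ⬝ᵥ M *ᵥ v + v ⬝ᵥ M.adjugate *ᵥ v = M.trace * (v ⬝ᵥ v) := by
    rw [← dotProduct_add, ← add_mulVec, add_adjugate_fin_two, smul_mulVec, one_mulVec,
      dotProduct_smul, smul_eq_mul]
  have htr_adj : M.adjugate.trace = M.trace := by
    simp [adjugate_fin_two, trace_fin_two, add_comm]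
  have hdet_adj : M.adjugate.det = M.det := by simp [det_adjugate]
  have hadj := det_mul_dotProduct_le_trace_mul_dotProduct_mulVec hM.adjugate v
  rw [htr_adj, hdet_adj] at hadj
  have hadj_nonneg : 0 ≤ v ⬝ᵥ M.adjugate *ᵥ v :=
    nonneg_of_mul_nonneg_right ((mul_nonneg hdet (dotProduct_star_self_nonneg v)).trans hadj) htr
  linarith

end Matrix

noncomputable def coefficientMatrix (g d t : ℝ) : Matrix (Fin 2) (Fin 2) ℝ :=
  !![1 + g, -(d * t); -(d * t), (1 + d ^ 2 * t ^ 2) / (1 + g)]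

theorem coefficientMatrix_isSymm (g d t : ℝ) : (coefficientMatrix g d t).IsSymm := by
  ext i j
  fin_cases i <;> fin_cases j <;> rfl

theorem det_coefficientMatrix {g : ℝ} (hg : 1 + g ≠ 0) (d t : ℝ) :
    (coefficientMatrix g d t).det = 1 := by
  rw [coefficientMatrix, det_fin_two_of]
  field_simp
  ring

theorem trace_coefficientMatrix_pos {g : ℝ} (hg : 0 < 1 + g) (d t : ℝ) :
    0 < (coefficientMatrix g d t).trace := by
  rw [coefficientMatrix, trace_fin_two_of]
  positivity

theorem trace_coefficientMatrix_le {g d t : ℝ} (hg : |g| ≤ 1 / 2) (hdt : (d * t) ^ 2 ≤ 1) :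
    (coefficientMatrix g d t).trace ≤ 9 / 2 := by
  obtain ⟨hg₁, hg₂⟩ := abs_le.mp hg
  have ha : 0 < 1 + g := by linarith
  have hkey : 9 / 2 - (1 + g + 2 / (1 + g)) = (1 + g - 1 / 2) * (4 - (1 + g)) / (1 + g) := by
    field_simp
    ring
  calc (coefficientMatrix g d t).trace = 1 + g + (1 + (d * t) ^ 2) / (1 + g) := by
        rw [coefficientMatrix, trace_fin_two_of, mul_pow]
    _ ≤ 1 + g + 2 / (1 + g) := by gcongr; linarith
    _ ≤ 9 / 2 := sub_nonneg.mp <| hkey ▸ div_nonneg (by nlinarith) ha.le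

theorem uniform_ellipticity_coefficient_matrix (g d t : ℝ)
    (hg : |g| ≤ 1 / 2) (hd : |d| ≤ 1) (ht0 : 0 ≤ t) (ht1 : t ≤ 1) :
    ∀ v : EuclideanSpace ℝ (Fin 2),
      (2 / 11) * ‖v‖ ^ 2 ≤
        (WithLp.equiv 2 (Fin 2 → ℝ) v) ⬝ᵥ
          (!![1 + g, -(d * t); -(d * t), (1 + d ^ 2 * t ^ 2) / (1 + g)] :
              Matrix (Fin 2) (Fin 2) ℝ).mulVec (WithLp.equiv 2 (Fin 2 → ℝ) v) ∧
      (WithLp.equiv 2 (Fin 2 → ℝ) v) ⬝ᵥ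
          (!![1 + g, -(d * t); -(d * t), (1 + d ^ 2 * t ^ 2) / (1 + g)] :
              Matrix (Fin 2) (Fin 2) ℝ).mulVec (WithLp.equiv 2 (Fin 2 → ℝ) v) ≤
        (11 / 2) * ‖v‖ ^ 2 := by
  intro v
  change (2 / 11) * ‖v‖ ^ 2 ≤ v.ofLp ⬝ᵥ coefficientMatrix g d t *ᵥ v.ofLp ∧
    v.ofLp ⬝ᵥ coefficientMatrix g d t *ᵥ v.ofLp ≤ (11 / 2) * ‖v‖ ^ 2
  have hnorm : ‖v‖ ^ 2 = v.ofLp ⬝ᵥ v.ofLp := by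
    rw [← real_inner_self_eq_norm_sq, EuclideanSpace.inner_eq_star_dotProduct, star_trivial]
  have hg₀ : 0 < 1 + g := by linarith [(abs_le.mp hg).1]
  have hdt : (d * t) ^ 2 ≤ 1 := by
    rw [sq_le_one_iff_abs_le_one, abs_mul, abs_of_nonneg ht0]
    exact mul_le_one₀ hd ht0 ht1
  have hM := coefficientMatrix_isSymm g d t
  have hdet := det_coefficientMatrix hg₀.ne' d t
  have htr₀ := trace_coefficientMatrix_pos hg₀ d t
  have htr := trace_coefficientMatrix_le hg hdt
  have hlower := det_mul_dotProduct_le_trace_mul_dotProduct_mulVec hM v.ofLp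
  have hupper := dotProduct_mulVec_le_trace_mul_dotProduct hM htr₀ (by rw [hdet]; norm_num) v.ofLp
  rw [hdet, one_mul] at hlower
  rw [hnorm]
  have hself : 0 ≤ v.ofLp ⬝ᵥ v.ofLp := dotProduct_star_self_nonneg _
  constructor <;> nlinarith
end

section
/- Let f ∈ L¹((0,1)) (Lebesgue measure) satisfy ∫₀¹ f(x) dx = 0. Then ‖f‖_{L¹(0,1)} ≤ 2·sup{ ∫₀¹ f(x) φ(x) dx : φ ∈ L^∞(0,1), ∫₀¹ φ(x) dx = 0, ‖φ‖_{L^∞(0,1)} ≤ 1 }. -/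
/-!
Test against `φ = (sign f - c) / 2`, where `c` is the mean of `sign f`. Since `|sign f| ≤ 1`,
also `|c| ≤ 1`, so `‖φ‖_∞ ≤ 1`; `φ` has mean zero by construction; and because `f` has mean zero
the constant `c` does not contribute to the pairing, so `∫ f φ = ∫ f sign f / 2 = ‖f‖₁ / 2`.
-/

open MeasureTheory Set
open scoped ENNReal

namespace Real

lemma measurable_sign : Measurable Real.sign :=
  Measurable.ite (measurableSet_lt measurable_id measurable_const) measurable_const
    (Measurable.ite (measurableSet_lt measurable_const measurable_id) measurable_const
      measurable_const)

lemma abs_sign_le_one (r : ℝ) : |Real.sign r| ≤ 1 := by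
  rcases Real.sign_apply_eq r with h | h | h <;> simp [h]

lemma self_mul_sign (r : ℝ) : r * Real.sign r = |r| := by
  rcases lt_trichotomy r 0 with h | rfl | h
  · simp [Real.sign_of_neg h, abs_of_neg h]
  · simp
  · simp [Real.sign_of_pos h, abs_of_pos h]

end Real

section

variable {α : Type*} [MeasurableSpace α] {μ : Measure α}

lemma ae_norm_le_one_of_eLpNorm_top_le_one {E : Type*} [NormedAddCommGroup E] {φ : α → E}
    (hφ : eLpNorm φ ∞ μ ≤ 1) : ∀ᵐ x ∂μ, ‖φ x‖ ≤ 1 := by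
  filter_upwards [ae_le_eLpNormEssSup (f := φ) (μ := μ)] with x hx
  have hx1 : ‖φ x‖ₑ ≤ 1 := (eLpNorm_exponent_top (f := φ) ▸ hx).trans hφ
  rwa [← ofReal_norm, ENNReal.ofReal_le_one] at hx1

lemma integral_mul_le_integral_abs_of_eLpNorm_top_le_one {f φ : α → ℝ} (hf : Integrable f μ)
    (hφ : eLpNorm φ ∞ μ ≤ 1) : ∫ x, f x * φ x ∂μ ≤ ∫ x, |f x| ∂μ :=
  calc ∫ x, f x * φ x ∂μ ≤ ‖∫ x, f x * φ x ∂μ‖ := le_abs_self _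
    _ ≤ ∫ x, ‖f x * φ x‖ ∂μ := norm_integral_le_integral_norm _
    _ ≤ ∫ x, |f x| ∂μ := by
      refine integral_mono_of_nonneg (.of_forall fun _ ↦ norm_nonneg _) hf.abs ?_
      filter_upwards [ae_norm_le_one_of_eLpNorm_top_le_one hφ] with x hx
      simpa [abs_mul] using mul_le_of_le_one_right (abs_nonneg (f x)) hx

lemma norm_average_le_of_norm_le [IsFiniteMeasure μ] {E : Type*} [NormedAddCommGroup E]
    [NormedSpace ℝ E] [CompleteSpace E] {g : α → E} {C : ℝ} (hC : 0 ≤ C) (hg : Integrable g μ)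
    (hgC : ∀ᵐ x ∂μ, ‖g x‖ ≤ C) : ‖⨍ x, g x ∂μ‖ ≤ C := by
  rcases eq_zero_or_neZero μ with rfl | _
  · simpa using hC
  simpa using (convex_closedBall (0 : E) C).average_mem Metric.isClosed_closedBall
    (by simpa using hgC) hg

lemma exists_mean_zero_test_integral_mul_eq_half_integral_abs [IsFiniteMeasure μ] {f : α → ℝ}
    (hf : Integrable f μ) (h0 : ∫ x, f x ∂μ = 0) :
    ∃ φ : α → ℝ, MemLp φ ∞ μ ∧ ∫ x, φ x ∂μ = 0 ∧ eLpNorm φ ∞ μ ≤ 1 ∧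
      ∫ x, f x * φ x ∂μ = (∫ x, |f x| ∂μ) / 2 := by
  set g : α → ℝ := fun x ↦ Real.sign (f x)
  have hg_le : ∀ x, ‖g x‖ ≤ 1 := fun x ↦ Real.abs_sign_le_one (f x)
  have hg_meas : AEStronglyMeasurable g μ :=
    (Real.measurable_sign.comp_aemeasurable hf.aemeasurable).aestronglyMeasurable
  have hg : Integrable g μ := .of_bound hg_meas 1 (.of_forall hg_le)
  set c := ⨍ x, g x ∂μ
  have hc : ‖c‖ ≤ 1 := norm_average_le_of_norm_le zero_le_one hg (.of_forall hg_le)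
  have hφ_le : ∀ x, ‖(g x - c) / 2‖ ≤ 1 := fun x ↦ by
    rw [norm_div, Real.norm_two, div_le_one two_pos]
    linarith [norm_sub_le (g x) c, hg_le x]
  refine ⟨fun x ↦ (g x - c) / 2,
    memLp_top_of_bound (by fun_prop) 1 (.of_forall hφ_le), ?_, ?_, ?_⟩
  · rw [integral_div, integral_sub_average, zero_div]
  · simpa [eLpNorm_exponent_top] using eLpNormEssSup_le_of_ae_bound (.of_forall hφ_le)
  · have hfg : Integrable (fun x ↦ f x * g x) μ := hf.mul_bdd hg_meas (.of_forall hg_le)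
    calc ∫ x, f x * ((g x - c) / 2) ∂μ = (∫ x, (f x * g x - c * f x) ∂μ) / 2 := by
          rw [← integral_div]; congr 1 with x; ring
      _ = (∫ x, |f x| ∂μ) / 2 := by
          rw [integral_sub hfg (hf.const_mul c), integral_const_mul, h0, mul_zero, sub_zero]
          simp only [g, Real.self_mul_sign]

theorem integral_abs_le_two_mul_sSup_of_integral_eq_zero [IsFiniteMeasure μ] {f : α → ℝ}
    (hf : Integrable f μ) (h0 : ∫ x, f x ∂μ = 0) :
    ∫ x, |f x| ∂μ ≤ 2 * sSup {r : ℝ | ∃ φ : α → ℝ, MemLp φ ∞ μ ∧ ∫ x, φ x ∂μ = 0 ∧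
      eLpNorm φ ∞ μ ≤ 1 ∧ r = ∫ x, f x * φ x ∂μ} := by
  obtain ⟨φ, hφ_mem, hφ_mean, hφ_le, hφ_pair⟩ :=
    exists_mean_zero_test_integral_mul_eq_half_integral_abs hf h0
  have hbdd : BddAbove {r : ℝ | ∃ φ : α → ℝ, MemLp φ ∞ μ ∧ ∫ x, φ x ∂μ = 0 ∧
      eLpNorm φ ∞ μ ≤ 1 ∧ r = ∫ x, f x * φ x ∂μ} := by
    refine ⟨∫ x, |f x| ∂μ, ?_⟩
    rintro r ⟨ψ, -, -, hψ, rfl⟩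
    exact integral_mul_le_integral_abs_of_eLpNorm_top_le_one hf hψ
  have := le_csSup hbdd ⟨φ, hφ_mem, hφ_mean, hφ_le, hφ_pair.symm⟩
  linarith

end

theorem l1_norm_le_two_mul_sup_of_mean_zero
    (f : ℝ → ℝ)
    (hf : Integrable f (volume.restrict (Ioo (0:ℝ) 1)))
    (h0 : ∫ x, f x ∂(volume.restrict (Ioo (0:ℝ) 1)) = 0) :
    (eLpNorm f 1 (volume.restrict (Ioo (0:ℝ) 1))).toReal ≤
      2 * sSup {r : ℝ | ∃ φ : ℝ → ℝ,
        MemLp φ ⊤ (volume.restrict (Ioo (0:ℝ) 1)) ∧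
        (∫ x, φ x ∂(volume.restrict (Ioo (0:ℝ) 1))) = 0 ∧
        eLpNorm φ ⊤ (volume.restrict (Ioo (0:ℝ) 1)) ≤ 1 ∧
        r = ∫ x, f x * φ x ∂(volume.restrict (Ioo (0:ℝ) 1))} := by
  rw [toReal_eLpNorm hf.aestronglyMeasurable, lpNorm_one_eq_integral_norm hf.aestronglyMeasurable]
  exact integral_abs_le_two_mul_sSup_of_integral_eq_zero hf h0
end

section
/- Let H be a real Hilbert space, λ > 0, K ⊆ H a convex set, ū ∈ K, and J : H → ℝ twice continuously (Fréchet) differentiable. Assume (i) J′(ū)(u − ū) ≥ 0 for all u ∈ K, and (ii) J″(ū)(h,h) ≥ (λ/2)‖h‖² for every h of the form h = t(u − ū) with u ∈ K and t ≥ 0. Then there exists ε > 0 such that for all u ∈ K with ‖u − ū‖ ≤ ε one has J(u) ≥ J(ū) + (λ/8)‖u − ū‖². -/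
/-!
Along the segment `t ↦ ū + t h`, `h = u - ū`, the second derivative of `J` stays within `λ/4 ‖h‖²`
of `J''(ū)(h,h) ≥ (λ/2)‖h‖²` as long as `‖h‖` is small, by continuity of `J''`. Integrating the
resulting bound `J''(ū + t h)(h,h) ≥ (λ/4)‖h‖²` twice over `[0, 1]` and using `J'(ū) h ≥ 0` gives
`J(u) ≥ J(ū) + (λ/8)‖h‖²`.
-/

open Set

theorem mul_sub_le_sub_of_hasDerivAt_of_le {f f' : ℝ → ℝ} {a b C : ℝ} (hab : a ≤ b)
    (hf : ∀ t ∈ Icc a b, HasDerivAt f (f' t) t) (hC : ∀ t ∈ Icc a b, C ≤ f' t) :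
    C * (b - a) ≤ f b - f a := by
  refine (convex_Icc a b).mul_sub_le_image_sub_of_le_deriv
    (fun t ht => (hf t ht).continuousAt.continuousWithinAt)
    (fun t ht => (hf t (interior_subset ht)).differentiableAt.differentiableWithinAt)
    (fun t ht => ?_) a (left_mem_Icc.2 hab) b (right_mem_Icc.2 hab) hab
  rw [(hf t (interior_subset ht)).deriv]
  exact hC t (interior_subset ht)

theorem add_mul_add_le_of_le_second_deriv {g g' g'' : ℝ → ℝ} {a b c : ℝ} (hab : a ≤ b)
    (hg : ∀ t ∈ Icc a b, HasDerivAt g (g' t) t) (hg' : ∀ t ∈ Icc a b, HasDerivAt g' (g'' t) t)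
    (hc : ∀ t ∈ Icc a b, c ≤ g'' t) :
    g a + g' a * (b - a) + c / 2 * (b - a) ^ 2 ≤ g b := by
  have hslope : ∀ t ∈ Icc a b, c * (t - a) ≤ g' t - g' a := fun t ht =>
    mul_sub_le_sub_of_hasDerivAt_of_le ht.1 (fun s hs => hg' s ⟨hs.1, hs.2.trans ht.2⟩)
      (fun s hs => hc s ⟨hs.1, hs.2.trans ht.2⟩)
  have hφ : ∀ t ∈ Icc a b, HasDerivAt (fun s => g s - g' a * (s - a) - c / 2 * (s - a) ^ 2)
      (g' t - g' a - c * (t - a)) t := by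
    intro t ht
    have hlin := ((hasDerivAt_id' t).sub_const a).const_mul (g' a)
    have hquad := (((hasDerivAt_id' t).sub_const a).fun_pow 2).const_mul (c / 2)
    exact (((hg t ht).fun_sub hlin).fun_sub hquad).congr_deriv (by norm_num; ring)
  have := mul_sub_le_sub_of_hasDerivAt_of_le hab hφ fun t ht => sub_nonneg.2 (hslope t ht)
  simp only [sub_self, mul_zero, ne_eq, OfNat.ofNat_ne_zero, not_false_eq_true, zero_pow] at this
  linarith

section LineRestriction

variable {E F : Type*} [NormedAddCommGroup E] [NormedSpace ℝ E]
  [NormedAddCommGroup F] [NormedSpace ℝ F]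

theorem hasDerivAt_apply_add_smul {J : E → F} {x h : E} {t : ℝ}
    (hJ : DifferentiableAt ℝ J (x + t • h)) :
    HasDerivAt (fun s : ℝ => J (x + s • h)) (fderiv ℝ J (x + t • h) h) t := by
  have hline : HasDerivAt (fun s : ℝ => x + s • h) h t := by
    simpa using ((hasDerivAt_id t).smul_const h).const_add x
  exact hJ.hasFDerivAt.comp_hasDerivAt t hline

theorem hasDerivAt_fderiv_apply_add_smul {J : E → F} {x h : E} {t : ℝ}
    (hJ : DifferentiableAt ℝ (fderiv ℝ J) (x + t • h)) :
    HasDerivAt (fun s : ℝ => fderiv ℝ J (x + s • h) h)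
      (fderiv ℝ (fderiv ℝ J) (x + t • h) h h) t :=
  (ContinuousLinearMap.apply ℝ F h).hasFDerivAt.comp_hasDerivAt t (hasDerivAt_apply_add_smul hJ)

theorem add_fderiv_add_le_of_le_fderiv_fderiv {J : E → ℝ} (hJ : ContDiff ℝ 2 J) {x h : E}
    {c : ℝ} (hc : ∀ t ∈ Icc (0 : ℝ) 1, c ≤ fderiv ℝ (fderiv ℝ J) (x + t • h) h h) :
    J x + fderiv ℝ J x h + c / 2 ≤ J (x + h) := by
  have hJ' : Differentiable ℝ (fderiv ℝ J) :=
    (hJ.fderiv_right (m := 1) le_rfl).differentiable one_ne_zero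
  simpa using add_mul_add_le_of_le_second_deriv zero_le_one
    (fun t _ => hasDerivAt_apply_add_smul (hJ.differentiable two_ne_zero _))
    (fun t _ => hasDerivAt_fderiv_apply_add_smul (hJ' _)) hc

theorem exists_pos_forall_dist_lt_apply_apply_sub_le {X : Type*} [PseudoMetricSpace X]
    {A : X → E →L[ℝ] E →L[ℝ] ℝ} {x : X} (hA : ContinuousAt A x) {ε : ℝ} (hε : 0 < ε) :
    ∃ δ > 0, ∀ y, dist y x < δ → ∀ h : E, A x h h - ε * ‖h‖ ^ 2 ≤ A y h h := by
  obtain ⟨δ, hδ, hAδ⟩ := (Metric.continuousAt_iff (f := A)).1 hA ε hε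
  refine ⟨δ, hδ, fun y hy h => ?_⟩
  have hdiff : |(A y - A x) h h| ≤ ε * ‖h‖ ^ 2 :=
    calc ‖(A y - A x) h h‖ ≤ ‖A y - A x‖ * ‖h‖ * ‖h‖ := (A y - A x).le_opNorm₂ h h
      _ ≤ ε * ‖h‖ * ‖h‖ := by
        gcongr
        exact ((dist_eq_norm (A y) (A x)).symm.trans_lt (hAδ hy)).le
      _ = ε * ‖h‖ ^ 2 := by ring
  have := (abs_le.1 hdiff).1
  simp only [sub_apply] at this
  linarith

end LineRestriction

theorem local_quadratic_growth_of_second_order_condition_general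
    {H : Type*} [NormedAddCommGroup H] [InnerProductSpace ℝ H]
    (lam : ℝ) (hlam : 0 < lam) (K : Set H)
    (ubar : H)
    (J : H → ℝ) (hJ : ContDiff ℝ 2 J)
    (hfirst : ∀ u ∈ K, fderiv ℝ J ubar (u - ubar) ≥ 0)
    (hsecond : ∀ u ∈ K, ∀ t : ℝ, 0 ≤ t →
      (fderiv ℝ (fderiv ℝ J) ubar (t • (u - ubar))) (t • (u - ubar)) ≥
        (lam / 2) * ‖t • (u - ubar)‖ ^ 2) :
    ∃ ε > 0, ∀ u ∈ K, ‖u - ubar‖ ≤ ε →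
      J u ≥ J ubar + (lam / 8) * ‖u - ubar‖ ^ 2 := by
  have hA : Continuous (fderiv ℝ (fderiv ℝ J)) :=
    (hJ.fderiv_right (m := 1) le_rfl).continuous_fderiv one_ne_zero
  obtain ⟨δ, hδ, hnear⟩ :=
    exists_pos_forall_dist_lt_apply_apply_sub_le hA.continuousAt (by positivity : 0 < lam / 4)
  refine ⟨δ / 2, by positivity, fun u hu hudist => ?_⟩
  have hcoercive := hsecond u hu 1 zero_le_one
  rw [one_smul] at hcoercive
  have hsegment : ∀ t ∈ Icc (0 : ℝ) 1, lam / 4 * ‖u - ubar‖ ^ 2 ≤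
      fderiv ℝ (fderiv ℝ J) (ubar + t • (u - ubar)) (u - ubar) (u - ubar) := by
    intro t ht
    have hdist : dist (ubar + t • (u - ubar)) ubar < δ := by
      rw [dist_eq_norm, add_sub_cancel_left, norm_smul, Real.norm_of_nonneg ht.1]
      nlinarith [norm_nonneg (u - ubar), ht.2]
    linarith [hnear _ hdist (u - ubar)]
  have hgrowth := add_fderiv_add_le_of_le_fderiv_fderiv hJ hsegment
  rw [add_sub_cancel] at hgrowth
  linarith [hfirst u hu]

theorem local_quadratic_growth_of_second_order_condition
    {H : Type*} [NormedAddCommGroup H] [InnerProductSpace ℝ H] [CompleteSpace H]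
    (lam : ℝ) (hlam : 0 < lam) (K : Set H) (hK : Convex ℝ K)
    (ubar : H) (hubar : ubar ∈ K)
    (J : H → ℝ) (hJ : ContDiff ℝ 2 J)
    (hfirst : ∀ u ∈ K, fderiv ℝ J ubar (u - ubar) ≥ 0)
    (hsecond : ∀ u ∈ K, ∀ t : ℝ, 0 ≤ t →
      (fderiv ℝ (fderiv ℝ J) ubar (t • (u - ubar))) (t • (u - ubar)) ≥
        (lam / 2) * ‖t • (u - ubar)‖ ^ 2) :
    ∃ ε > 0, ∀ u ∈ K, ‖u - ubar‖ ≤ ε →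
      J u ≥ J ubar + (lam / 8) * ‖u - ubar‖ ^ 2 :=
  local_quadratic_growth_of_second_order_condition_general lam hlam K ubar J hJ hfirst hsecond
end

section
/- Let H be a real Hilbert space, λ > 0, K ⊆ H a convex set, ū ∈ K, and J : H → ℝ twice continuously (Fréchet) differentiable. Assume J″(ū)(h,h) ≥ (λ/2)‖h‖² for every h of the form h = t(u − ū) with u ∈ K and t ≥ 0. Then there exists ε > 0 such that for all u ∈ K with ‖u − ū‖ ≤ ε one has (J′(u) − J′(ū))(u − ū) ≥ (λ/4)‖u − ū‖². -/
/-!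
Since `J'` is differentiable at `ū`, `J'(u) - J'(ū) = J''(ū)(u - ū) + o(‖u - ū‖)`, so
pairing with `u - ū` costs at most `(λ/4)‖u - ū‖²` near `ū`, while the direction `u - ū` itself
(`t = 1`) gets `(λ/2)‖u - ū‖²` from `J''(ū)`.
-/

open Metric

section

variable {E F : Type*} [NormedAddCommGroup E] [NormedSpace ℝ E] [NormedAddCommGroup F]
  [NormedSpace ℝ F]

theorem HasFDerivAt.exists_norm_sub_sub_le {f : E → F} {f' : E →L[ℝ] F} {x : E}
    (hf : HasFDerivAt f f' x) {c : ℝ} (hc : 0 < c) :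
    ∃ ε > 0, ∀ y, ‖y - x‖ ≤ ε → ‖f y - f x - f' (y - x)‖ ≤ c * ‖y - x‖ := by
  obtain ⟨ε, hε, hball⟩ := nhds_basis_closedBall.eventually_iff.mp (hf.isLittleO.def hc)
  exact ⟨ε, hε, fun y hy => hball (mem_closedBall_iff_norm.mpr hy)⟩

theorem HasFDerivAt.exists_apply_sub_ge {f : E → E →L[ℝ] ℝ} {f' : E →L[ℝ] E →L[ℝ] ℝ} {x : E}
    (hf : HasFDerivAt f f' x) {c : ℝ} (hc : 0 < c) :
    ∃ ε > 0, ∀ y, ‖y - x‖ ≤ ε → f' (y - x) (y - x) - c * ‖y - x‖ ^ 2 ≤ (f y - f x) (y - x) := by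
  obtain ⟨ε, hε, hrem⟩ := hf.exists_norm_sub_sub_le hc
  refine ⟨ε, hε, fun y hy => ?_⟩
  set h := y - x
  have hpair : |(f y - f x - f' h) h| ≤ c * ‖h‖ ^ 2 :=
    calc |(f y - f x - f' h) h| ≤ ‖f y - f x - f' h‖ * ‖h‖ := (f y - f x - f' h).le_opNorm h
      _ ≤ c * ‖h‖ * ‖h‖ := by gcongr; exact hrem y hy
      _ = c * ‖h‖ ^ 2 := by ring
  have hsplit : (f y - f x) h = f' h h + (f y - f x - f' h) h := by simp
  linarith [neg_abs_le ((f y - f x - f' h) h)]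

end

theorem local_convexity_of_second_order_condition_general
    {H : Type*} [NormedAddCommGroup H] [InnerProductSpace ℝ H]
    (lam : ℝ) (hlam : 0 < lam) (K : Set H)
    (ubar : H)
    (J : H → ℝ) (hJ : ContDiff ℝ 2 J)
    (hsecond : ∀ u ∈ K, ∀ t : ℝ, 0 ≤ t →
      (fderiv ℝ (fderiv ℝ J) ubar (t • (u - ubar))) (t • (u - ubar)) ≥
        (lam / 2) * ‖t • (u - ubar)‖ ^ 2) :
    ∃ ε > 0, ∀ u ∈ K, ‖u - ubar‖ ≤ ε →
      (fderiv ℝ J u - fderiv ℝ J ubar) (u - ubar) ≥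
        (lam / 4) * ‖u - ubar‖ ^ 2 := by
  have hJ' : HasFDerivAt (fderiv ℝ J) (fderiv ℝ (fderiv ℝ J) ubar) ubar :=
    ((hJ.fderiv_right (m := 1) (by norm_num)).differentiable one_ne_zero ubar).hasFDerivAt
  obtain ⟨ε, hε, hlower⟩ := hJ'.exists_apply_sub_ge (c := lam / 4) (by positivity)
  refine ⟨ε, hε, fun u hu hdist => ?_⟩
  have hcoercive := hsecond u hu 1 zero_le_one
  rw [one_smul] at hcoercive
  linarith [hlower u hdist]

theorem local_convexity_of_second_order_condition
    {H : Type*} [NormedAddCommGroup H] [InnerProductSpace ℝ H] [CompleteSpace H]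
    (lam : ℝ) (hlam : 0 < lam) (K : Set H) (hK : Convex ℝ K)
    (ubar : H) (hubar : ubar ∈ K)
    (J : H → ℝ) (hJ : ContDiff ℝ 2 J)
    (hsecond : ∀ u ∈ K, ∀ t : ℝ, 0 ≤ t →
      (fderiv ℝ (fderiv ℝ J) ubar (t • (u - ubar))) (t • (u - ubar)) ≥
        (lam / 2) * ‖t • (u - ubar)‖ ^ 2) :
    ∃ ε > 0, ∀ u ∈ K, ‖u - ubar‖ ≤ ε →
      (fderiv ℝ J u - fderiv ℝ J ubar) (u - ubar) ≥
        (lam / 4) * ‖u - ubar‖ ^ 2 :=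
  local_convexity_of_second_order_condition_general lam hlam K ubar J hJ hsecond
end

section
/- Let H be a real Hilbert space, V ⊆ H a complete (closed) linear subspace with orthogonal projection P : H → V, K ⊆ H a convex set, and λ > 0. Let ū ∈ K, Ū ∈ K ∩ V, and s̄, s_U, S_U ∈ H satisfy: (i) ⟨λū + s̄, u − ū⟩ ≥ 0 for all u ∈ K; (ii) ⟨λŪ + S_U, U − Ū⟩ ≥ 0 for all U ∈ K ∩ V; (iii) λŪ + S_U ∈ V; (iv) P(ū) ∈ K; and (v) ⟨(λŪ + s_U) − (λū + s̄), Ū − ū⟩ ≥ (λ/4)‖Ū − ū‖². Then ‖ū − Ū‖ ≤ (4/λ)‖s_U − S_U‖. -/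
/-!
Test (ii) with the admissible discrete control `P ū`: since `λŪ + S_U ∈ V` is orthogonal to
`P ū - ū`, this gives `⟪λŪ + S_U, ū - Ū⟫ ≥ 0`. Adding (i) tested with `Ū` and (v), the gradient
terms telescope to `(λ/4)‖Ū - ū‖² ≤ ⟪s_U - S_U, Ū - ū⟫`, and Cauchy–Schwarz concludes.
-/

open scoped RealInnerProductSpace

section

variable {H : Type*} [NormedAddCommGroup H] [InnerProductSpace ℝ H]

theorem Submodule.inner_orthogonalProjectionOnto_sub_eq_of_mem {V : Submodule ℝ H}
    [V.HasOrthogonalProjection] {g : H} (hg : g ∈ V) (x y : H) :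
    ⟪g, (V.orthogonalProjectionOnto x : H) - y⟫ = ⟪g, x - y⟫ := by
  rw [inner_sub_right, inner_sub_right, ← V.coe_inner ⟨g, hg⟩,
    inner_orthogonalProjectionOnto_eq_of_mem_left]

theorem mul_norm_le_of_mul_sq_le_inner {c : ℝ} {d e : H} (h : c * ‖d‖ ^ 2 ≤ ⟪e, d⟫) :
    c * ‖d‖ ≤ ‖e‖ := by
  rcases (norm_nonneg d).eq_or_lt with hd | hd
  · rw [← hd, mul_zero]
    exact norm_nonneg e
  · refine le_of_mul_le_mul_right ?_ hd
    calc c * ‖d‖ * ‖d‖ = c * ‖d‖ ^ 2 := by ring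
      _ ≤ ⟪e, d⟫ := h
      _ ≤ ‖e‖ * ‖d‖ := real_inner_le_norm e d

end

theorem apriori_error_estimate_optimal_control_general
    {H : Type*} [NormedAddCommGroup H] [InnerProductSpace ℝ H]
    (V : Submodule ℝ H) [CompleteSpace V]
    (K : Set H)
    (lam : ℝ) (hlam : 0 < lam)
    (ubar Ubar sbar sU SU : H)
    (hUbarK : Ubar ∈ K)
    (hcont : ∀ u ∈ K, ⟪lam • ubar + sbar, u - ubar⟫ ≥ 0)
    (hdisc : ∀ U : H, U ∈ K → U ∈ V → ⟪lam • Ubar + SU, U - Ubar⟫ ≥ 0)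
    (hgrad : lam • Ubar + SU ∈ V)
    (hproj : ((Submodule.orthogonalProjection V ubar : V) : H) ∈ K)
    (hconv : ⟪(lam • Ubar + sU) - (lam • ubar + sbar), Ubar - ubar⟫ ≥
      (lam / 4) * ‖Ubar - ubar‖ ^ 2) :
    ‖ubar - Ubar‖ ≤ (4 / lam) * ‖sU - SU‖ := by
  have hcontU := hcont Ubar hUbarK
  have hdiscP : 0 ≤ ⟪lam • Ubar + SU, ubar - Ubar⟫ := by
    rw [← V.inner_orthogonalProjectionOnto_sub_eq_of_mem hgrad]
    exact hdisc _ hproj (Submodule.coe_mem _)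
  have hsplit : ⟪sU - SU, Ubar - ubar⟫ =
      ⟪(lam • Ubar + sU) - (lam • ubar + sbar), Ubar - ubar⟫ + ⟪lam • ubar + sbar, Ubar - ubar⟫
        + ⟪lam • Ubar + SU, ubar - Ubar⟫ := by
    rw [← inner_add_left, ← neg_sub Ubar ubar, inner_neg_right, ← sub_eq_add_neg,
      ← inner_sub_left]
    congr 1
    abel
  have hbound : lam / 4 * ‖Ubar - ubar‖ ≤ ‖sU - SU‖ :=
    mul_norm_le_of_mul_sq_le_inner (by linarith)
  rw [norm_sub_rev, div_mul_eq_mul_div, le_div_iff₀ hlam]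
  linarith

theorem apriori_error_estimate_optimal_control
    {H : Type*} [NormedAddCommGroup H] [InnerProductSpace ℝ H] [CompleteSpace H]
    (V : Submodule ℝ H) [CompleteSpace V]
    (K : Set H) (hK : Convex ℝ K)
    (lam : ℝ) (hlam : 0 < lam)
    (ubar Ubar sbar sU SU : H)
    (hubar : ubar ∈ K) (hUbarK : Ubar ∈ K) (hUbarV : Ubar ∈ V)
    (hcont : ∀ u ∈ K, ⟪lam • ubar + sbar, u - ubar⟫ ≥ 0)
    (hdisc : ∀ U : H, U ∈ K → U ∈ V → ⟪lam • Ubar + SU, U - Ubar⟫ ≥ 0)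
    (hgrad : lam • Ubar + SU ∈ V)
    (hproj : ((Submodule.orthogonalProjection V ubar : V) : H) ∈ K)
    (hconv : ⟪(lam • Ubar + sU) - (lam • ubar + sbar), Ubar - ubar⟫ ≥
      (lam / 4) * ‖Ubar - ubar‖ ^ 2) :
    ‖ubar - Ubar‖ ≤ (4 / lam) * ‖sU - SU‖ :=
  apriori_error_estimate_optimal_control_general V K lam hlam ubar Ubar sbar sU SU hUbarK hcont
    hdisc hgrad hproj hconv
end
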